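/- Let X ⊂ ℝ² be generic and suppose x, y ∈ X span an empty rectangle. Then in each of the following four regions there is at most one point z ∈ X spanning an empty rectangle with both x and y: (i) the strip min(x₁,y₁) < z₁ < max(x₁,y₁), z₂ > max(x₂,y₂); (ii) the strip min(x₁,y₁) < z₁ < max(x₁,y₁), z₂ < min(x₂,y₂); (iii) the strip min(x₂,y₂) < z₂ < max(x₂,y₂), z₁ > max(x₁,y₁); (iv) the strip min(x₂,y₂) < z₂ < max(x₂,y₂), z₁ < min(x₁,y₁). -/
import Mathlib


open scoped Classical

/-- A finite planar point set is generic if no two distinct points share a coordinate. -/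
def Generic (X : Finset (ℝ × ℝ)) : Prop :=
  ∀ p ∈ X, ∀ q ∈ X, p ≠ q → p.1 ≠ q.1 ∧ p.2 ≠ q.2

/-- `p` and `q` span an empty rectangle w.r.t. `X`. -/
def SpansEmptyRect (X : Finset (ℝ × ℝ)) (p q : ℝ × ℝ) : Prop :=
  ∀ z ∈ X, ¬ (min p.1 q.1 < z.1 ∧ z.1 < max p.1 q.1 ∧
              min p.2 q.2 < z.2 ∧ z.2 < max p.2 q.2)

/-- `z` is a common neighbor of `x` and `y`: a point of `X` spanning an empty
rectangle with both `x` and `y`. -/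
def CommonNbr (X : Finset (ℝ × ℝ)) (x y z : ℝ × ℝ) : Prop :=
  z ∈ X ∧ SpansEmptyRect X x z ∧ SpansEmptyRect X y z

lemma hit {X : Finset (ℝ × ℝ)} {p q z : ℝ × ℝ} (h : SpansEmptyRect X p q) (hz : z ∈ X)
    (h1 : min p.1 q.1 < z.1) (h2 : z.1 < max p.1 q.1)
    (h3 : min p.2 q.2 < z.2) (h4 : z.2 < max p.2 q.2) : False :=
  h z hz ⟨h1, h2, h3, h4⟩

lemma core1 {X : Finset (ℝ × ℝ)} {x y z z' : ℝ × ℝ} (hzX : z ∈ X)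
    (hx : SpansEmptyRect X x z') (hy : SpansEmptyRect X y z')
    (ha : min x.1 y.1 < z.1) (hb : z.1 < max x.1 y.1)
    (hc : max x.2 y.2 < z.2) (hd : z.2 < z'.2)
    (he : z.1 < z'.1 ∨ z'.1 < z.1) : False := by
  rcases he with h' | h' <;> rcases le_total x.1 y.1 with h | h
  · exact hit hx hzX (min_lt_iff.mpr (Or.inl (by rw [min_eq_left h] at ha; exact ha)))
      (lt_max_iff.mpr (Or.inr h'))
      (min_lt_iff.mpr (Or.inl (lt_of_le_of_lt (le_max_left _ _) hc)))
      (lt_max_iff.mpr (Or.inr hd))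
  · exact hit hy hzX (min_lt_iff.mpr (Or.inl (by rw [min_eq_right h] at ha; exact ha)))
      (lt_max_iff.mpr (Or.inr h'))
      (min_lt_iff.mpr (Or.inl (lt_of_le_of_lt (le_max_right _ _) hc)))
      (lt_max_iff.mpr (Or.inr hd))
  · exact hit hy hzX (min_lt_iff.mpr (Or.inr h'))
      (lt_max_iff.mpr (Or.inl (by rw [max_eq_right h] at hb; exact hb)))
      (min_lt_iff.mpr (Or.inl (lt_of_le_of_lt (le_max_right _ _) hc)))
      (lt_max_iff.mpr (Or.inr hd))
  · exact hit hx hzX (min_lt_iff.mpr (Or.inr h'))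
      (lt_max_iff.mpr (Or.inl (by rw [max_eq_left h] at hb; exact hb)))
      (min_lt_iff.mpr (Or.inl (lt_of_le_of_lt (le_max_left _ _) hc)))
      (lt_max_iff.mpr (Or.inr hd))

lemma core2 {X : Finset (ℝ × ℝ)} {x y z z' : ℝ × ℝ} (hzX : z ∈ X)
    (hx : SpansEmptyRect X x z') (hy : SpansEmptyRect X y z')
    (ha : min x.1 y.1 < z.1) (hb : z.1 < max x.1 y.1)
    (hc : z.2 < min x.2 y.2) (hd : z'.2 < z.2)
    (he : z.1 < z'.1 ∨ z'.1 < z.1) : False := by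
  rcases he with h' | h' <;> rcases le_total x.1 y.1 with h | h
  · exact hit hx hzX (min_lt_iff.mpr (Or.inl (by rw [min_eq_left h] at ha; exact ha)))
      (lt_max_iff.mpr (Or.inr h'))
      (min_lt_iff.mpr (Or.inr hd))
      (lt_max_iff.mpr (Or.inl (lt_of_lt_of_le hc (min_le_left _ _))))
  · exact hit hy hzX (min_lt_iff.mpr (Or.inl (by rw [min_eq_right h] at ha; exact ha)))
      (lt_max_iff.mpr (Or.inr h'))
      (min_lt_iff.mpr (Or.inr hd))
      (lt_max_iff.mpr (Or.inl (lt_of_lt_of_le hc (min_le_right _ _))))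
  · exact hit hy hzX (min_lt_iff.mpr (Or.inr h'))
      (lt_max_iff.mpr (Or.inl (by rw [max_eq_right h] at hb; exact hb)))
      (min_lt_iff.mpr (Or.inr hd))
      (lt_max_iff.mpr (Or.inl (lt_of_lt_of_le hc (min_le_right _ _))))
  · exact hit hx hzX (min_lt_iff.mpr (Or.inr h'))
      (lt_max_iff.mpr (Or.inl (by rw [max_eq_left h] at hb; exact hb)))
      (min_lt_iff.mpr (Or.inr hd))
      (lt_max_iff.mpr (Or.inl (lt_of_lt_of_le hc (min_le_left _ _))))

lemma core3 {X : Finset (ℝ × ℝ)} {x y z z' : ℝ × ℝ} (hzX : z ∈ X)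
    (hx : SpansEmptyRect X x z') (hy : SpansEmptyRect X y z')
    (ha : min x.2 y.2 < z.2) (hb : z.2 < max x.2 y.2)
    (hc : max x.1 y.1 < z.1) (hd : z.1 < z'.1)
    (he : z.2 < z'.2 ∨ z'.2 < z.2) : False := by
  rcases he with h' | h' <;> rcases le_total x.2 y.2 with h | h
  · exact hit hx hzX (min_lt_iff.mpr (Or.inl (lt_of_le_of_lt (le_max_left _ _) hc)))
      (lt_max_iff.mpr (Or.inr hd))
      (min_lt_iff.mpr (Or.inl (by rw [min_eq_left h] at ha; exact ha)))
      (lt_max_iff.mpr (Or.inr h'))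
  · exact hit hy hzX (min_lt_iff.mpr (Or.inl (lt_of_le_of_lt (le_max_right _ _) hc)))
      (lt_max_iff.mpr (Or.inr hd))
      (min_lt_iff.mpr (Or.inl (by rw [min_eq_right h] at ha; exact ha)))
      (lt_max_iff.mpr (Or.inr h'))
  · exact hit hy hzX (min_lt_iff.mpr (Or.inl (lt_of_le_of_lt (le_max_right _ _) hc)))
      (lt_max_iff.mpr (Or.inr hd))
      (min_lt_iff.mpr (Or.inr h'))
      (lt_max_iff.mpr (Or.inl (by rw [max_eq_right h] at hb; exact hb)))
  · exact hit hx hzX (min_lt_iff.mpr (Or.inl (lt_of_le_of_lt (le_max_left _ _) hc)))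
      (lt_max_iff.mpr (Or.inr hd))
      (min_lt_iff.mpr (Or.inr h'))
      (lt_max_iff.mpr (Or.inl (by rw [max_eq_left h] at hb; exact hb)))

lemma core4 {X : Finset (ℝ × ℝ)} {x y z z' : ℝ × ℝ} (hzX : z ∈ X)
    (hx : SpansEmptyRect X x z') (hy : SpansEmptyRect X y z')
    (ha : min x.2 y.2 < z.2) (hb : z.2 < max x.2 y.2)
    (hc : z.1 < min x.1 y.1) (hd : z'.1 < z.1)
    (he : z.2 < z'.2 ∨ z'.2 < z.2) : False := by
  rcases he with h' | h' <;> rcases le_total x.2 y.2 with h | h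
  · exact hit hx hzX (min_lt_iff.mpr (Or.inr hd))
      (lt_max_iff.mpr (Or.inl (lt_of_lt_of_le hc (min_le_left _ _))))
      (min_lt_iff.mpr (Or.inl (by rw [min_eq_left h] at ha; exact ha)))
      (lt_max_iff.mpr (Or.inr h'))
  · exact hit hy hzX (min_lt_iff.mpr (Or.inr hd))
      (lt_max_iff.mpr (Or.inl (lt_of_lt_of_le hc (min_le_right _ _))))
      (min_lt_iff.mpr (Or.inl (by rw [min_eq_right h] at ha; exact ha)))
      (lt_max_iff.mpr (Or.inr h'))
  · exact hit hy hzX (min_lt_iff.mpr (Or.inr hd))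
      (lt_max_iff.mpr (Or.inl (lt_of_lt_of_le hc (min_le_right _ _))))
      (min_lt_iff.mpr (Or.inr h'))
      (lt_max_iff.mpr (Or.inl (by rw [max_eq_right h] at hb; exact hb)))
  · exact hit hx hzX (min_lt_iff.mpr (Or.inr hd))
      (lt_max_iff.mpr (Or.inl (lt_of_lt_of_le hc (min_le_left _ _))))
      (min_lt_iff.mpr (Or.inr h'))
      (lt_max_iff.mpr (Or.inl (by rw [max_eq_left h] at hb; exact hb)))

theorem strip_lemma (X : Finset (ℝ × ℝ)) (hgen : Generic X)
    (x y : ℝ × ℝ) (hx : x ∈ X) (hy : y ∈ X) (hxy : x ≠ y)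
    (hedge : SpansEmptyRect X x y) :
    -- (i) at most one common neighbor in the upper strip A↑(x,y)
    (∀ z z', CommonNbr X x y z →
        (min x.1 y.1 < z.1 ∧ z.1 < max x.1 y.1 ∧ max x.2 y.2 < z.2) →
      CommonNbr X x y z' →
        (min x.1 y.1 < z'.1 ∧ z'.1 < max x.1 y.1 ∧ max x.2 y.2 < z'.2) →
      z = z') ∧
    -- (ii) at most one common neighbor in the lower strip A↓(x,y)
    (∀ z z', CommonNbr X x y z →
        (min x.1 y.1 < z.1 ∧ z.1 < max x.1 y.1 ∧ z.2 < min x.2 y.2) →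
      CommonNbr X x y z' →
        (min x.1 y.1 < z'.1 ∧ z'.1 < max x.1 y.1 ∧ z'.2 < min x.2 y.2) →
      z = z') ∧
    -- (iii) at most one common neighbor in the right strip A→(x,y)
    (∀ z z', CommonNbr X x y z →
        (min x.2 y.2 < z.2 ∧ z.2 < max x.2 y.2 ∧ max x.1 y.1 < z.1) →
      CommonNbr X x y z' →
        (min x.2 y.2 < z'.2 ∧ z'.2 < max x.2 y.2 ∧ max x.1 y.1 < z'.1) →
      z = z') ∧
    -- (iv) at most one common neighbor in the left strip A←(x,y)
    (∀ z z', CommonNbr X x y z →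
        (min x.2 y.2 < z.2 ∧ z.2 < max x.2 y.2 ∧ z.1 < min x.1 y.1) →
      CommonNbr X x y z' →
        (min x.2 y.2 < z'.2 ∧ z'.2 < max x.2 y.2 ∧ z'.1 < min x.1 y.1) →
      z = z') := by
  refine ⟨?_, ?_, ?_, ?_⟩ <;>
    (intro z z' hz hs hz' hs'
     by_contra hne
     obtain ⟨h1ne, h2ne⟩ := hgen z hz.1 z' hz'.1 hne)
  · rcases lt_or_gt_of_ne h2ne with h | h
    · exact core1 hz.1 hz'.2.1 hz'.2.2 hs.1 hs.2.1 hs.2.2 h (lt_or_gt_of_ne h1ne)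
    · exact core1 hz'.1 hz.2.1 hz.2.2 hs'.1 hs'.2.1 hs'.2.2 h (lt_or_gt_of_ne h1ne.symm)
  · rcases lt_or_gt_of_ne h2ne with h | h
    · exact core2 hz'.1 hz.2.1 hz.2.2 hs'.1 hs'.2.1 hs'.2.2 h (lt_or_gt_of_ne h1ne.symm)
    · exact core2 hz.1 hz'.2.1 hz'.2.2 hs.1 hs.2.1 hs.2.2 h (lt_or_gt_of_ne h1ne)
  · rcases lt_or_gt_of_ne h1ne with h | h
    · exact core3 hz.1 hz'.2.1 hz'.2.2 hs.1 hs.2.1 hs.2.2 h (lt_or_gt_of_ne h2ne)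
    · exact core3 hz'.1 hz.2.1 hz.2.2 hs'.1 hs'.2.1 hs'.2.2 h (lt_or_gt_of_ne h2ne.symm)
  · rcases lt_or_gt_of_ne h1ne with h | h
    · exact core4 hz'.1 hz.2.1 hz.2.2 hs'.1 hs'.2.1 hs'.2.2 h (lt_or_gt_of_ne h2ne.symm)
    · exact core4 hz.1 hz'.2.1 hz'.2.2 hs.1 hs.2.1 hs.2.2 h (lt_or_gt_of_ne h2ne)
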